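/- Let λ > 0 and let E₁ : ℝ → ℝ be the 2π-periodic function E₁(t) = ∑_{k∈ℤ} exp(−λ(t + 2kπ)²). Then E₁(0) ≥ E₁(t) ≥ E₁(π) for all t ∈ ℝ; moreover E₁ is decreasing on the interval [0, π]. -/

import Mathlib

/-!
For small `λ`, Poisson summation writes `E₁` as a positive multiple of
`1 + 2 ∑ₙ qⁿ² cos nt` with `q = exp (-1/(4λ)) ≤ 4/7`; since `cos nt + n² cos t` decreases
on `[0, π]`, the term `2q cos t` dominates all the others.
For large `λ` the translated Gaussians are well separated: on `[π/2, π]` each pair of them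
symmetric about an odd multiple of `π` is already decreasing, and on `[0, π/2]` the decrease of
the central Gaussian `exp (-λt²)` absorbs the exponentially small increase of all the other
pairs. The bounds `E₁ π ≤ E₁ t ≤ E₁ 0` then follow from evenness and `2π`-periodicity.
-/

/-- The periodization `E₁(t) = ∑_{k∈ℤ} exp(−λ(t + 2kπ)²)` of the Gaussian. -/
noncomputable def E1 (lam t : ℝ) : ℝ :=
  ∑' k : ℤ, Real.exp (-lam * (t + 2 * (k : ℝ) * Real.pi) ^ 2)

open Real Set

theorem Function.Periodic.extrema_of_even_of_antitoneOn {α : Type*} [Preorder α] {f : ℝ → α}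
    {c : ℝ} (hc : 0 < c) (heven : Function.Even f) (hper : Function.Periodic f (2 * c))
    (hanti : AntitoneOn f (Icc 0 c)) (x : ℝ) : f x ≤ f 0 ∧ f c ≤ f x := by
  have hc' : c ∈ Icc 0 c := ⟨hc.le, le_rfl⟩
  have h0 : (0 : ℝ) ∈ Icc 0 c := ⟨le_rfl, hc.le⟩
  obtain ⟨y, ⟨hy0, hy2c⟩, hxy⟩ := hper.exists_mem_Ico₀ (by linarith) x
  rw [hxy]
  rcases le_total y c with hyc | hcy
  · exact ⟨hanti h0 ⟨hy0, hyc⟩ hy0, hanti ⟨hy0, hyc⟩ hc' hyc⟩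
  · have hy : f y = f (2 * c - y) := by rw [← heven, ← hper, neg_add_eq_sub]
    have hmem : 2 * c - y ∈ Icc 0 c := ⟨by linarith, by linarith⟩
    rw [hy]
    exact ⟨hanti h0 hmem hmem.1, hanti hmem hc' hmem.2⟩

theorem HasSum.nat_succ_add_neg_succ {G : Type*} [AddCommGroup G] [UniformSpace G]
    [IsUniformAddGroup G] [CompleteSpace G] [T2Space G] {f : ℤ → G} {a : G} (hf : HasSum f a) :
    HasSum (fun n : ℕ ↦ f (n + 1) + f (-(n + 1))) (a - f 0) := by
  have h₁ : Summable fun n : ℕ ↦ f (n + 1) :=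
    hf.summable.comp_injective (i := fun n : ℕ ↦ (n : ℤ) + 1) fun _ _ h ↦ by simpa using h
  have h₂ : Summable fun n : ℕ ↦ f (-(n + 1)) :=
    hf.summable.comp_injective (i := fun n : ℕ ↦ -((n : ℤ) + 1)) fun _ _ h ↦ by simpa using h
  convert h₁.hasSum.add h₂.hasSum using 1
  rw [hf.unique (h₁.hasSum.of_add_one_of_neg_add_one h₂.hasSum)]
  abel

theorem summable_and_tsum_le_of_le_geometric {ε : ℕ → ℝ} {C r : ℝ} (hε : ∀ n, 0 ≤ ε n)
    (hr₀ : 0 ≤ r) (hr₁ : r < 1) (hle : ∀ n, ε n ≤ C * r ^ n) :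
    Summable ε ∧ ∑' n, ε n ≤ C / (1 - r) := by
  have hgeom := (summable_geometric_of_lt_one hr₀ hr₁).mul_left C
  have hsum := Summable.of_nonneg_of_le hε hle hgeom
  refine ⟨hsum, ?_⟩
  calc ∑' n, ε n ≤ ∑' n, C * r ^ n := hsum.tsum_le_tsum hle hgeom
    _ = C / (1 - r) := by rw [tsum_mul_left, tsum_geometric_of_lt_one hr₀ hr₁, div_eq_mul_inv]

theorem AntitoneOn.add_tsum_of_dominated {α ι : Type*} [Preorder α] {s : Set α} {f₀ : α → ℝ}
    {f : ι → α → ℝ} {ε : ι → ℝ} (h₀ : AntitoneOn f₀ s)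
    (h : ∀ i, AntitoneOn (fun x ↦ f i x + ε i * f₀ x) s) (hf : ∀ x ∈ s, Summable (f · x))
    (hε : Summable ε) (hε₁ : ∑' i, ε i ≤ 1) : AntitoneOn (fun x ↦ f₀ x + ∑' i, f i x) s := by
  intro x hx y hy hxy
  have hsum : ∑' i, (f i y + ε i * f₀ y) ≤ ∑' i, (f i x + ε i * f₀ x) :=
    Summable.tsum_le_tsum (fun i ↦ h i hx hy hxy) ((hf y hy).add (hε.mul_right _))
      ((hf x hx).add (hε.mul_right _))
  rw [(hf y hy).tsum_add (hε.mul_right _), (hf x hx).tsum_add (hε.mul_right _),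
    hε.tsum_mul_right, hε.tsum_mul_right] at hsum
  nlinarith [h₀ hx hy hxy]

theorem antitoneOn_Icc_of_hasDerivAt_nonpos {f f' : ℝ → ℝ} {a b : ℝ}
    (hf : ∀ x, HasDerivAt f (f' x) x) (hf' : ∀ x ∈ Ioo a b, f' x ≤ 0) :
    AntitoneOn f (Icc a b) :=
  antitoneOn_of_hasDerivWithinAt_nonpos (convex_Icc a b)
    (fun x _ ↦ (hf x).continuousAt.continuousWithinAt) (fun x _ ↦ (hf x).hasDerivWithinAt)
    (by simpa only [interior_Icc] using hf')

theorem hasDerivAt_exp_neg_mul_add_sq (lam c x : ℝ) :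
    HasDerivAt (fun x ↦ exp (-lam * (x + c) ^ 2))
      (-2 * lam * (x + c) * exp (-lam * (x + c) ^ 2)) x :=
  ((((hasDerivAt_id' x).add_const c).fun_pow 2).const_mul (-lam)).exp.congr_deriv (by ring)

theorem hasDerivAt_gaussian_pair (lam P x : ℝ) :
    HasDerivAt (fun u ↦ exp (-lam * (u + P) ^ 2) + exp (-lam * (u - P) ^ 2))
      (-2 * lam * ((x + P) * exp (-lam * (x + P) ^ 2) + (x - P) * exp (-lam * (x - P) ^ 2)))
      x := by
  have h :=
    (hasDerivAt_exp_neg_mul_add_sq lam P x).fun_add (hasDerivAt_exp_neg_mul_add_sq lam (-P) x)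
  simp only [← sub_eq_add_neg] at h
  exact h.congr_deriv (by ring)

theorem antitoneOn_exp_neg_mul_sq {lam : ℝ} (hlam : 0 ≤ lam) :
    AntitoneOn (fun x ↦ exp (-lam * x ^ 2)) (Ici 0) := fun x hx y _ hxy ↦
  exp_le_exp.2 (by nlinarith [pow_le_pow_left₀ hx hxy 2])

theorem antitoneOn_Icc_neg_gaussian_pair {lam P a : ℝ} (ha : a ≤ P)
    (hlam : 1 ≤ 2 * lam * P * (P - a)) :
    AntitoneOn (fun u ↦ exp (-lam * (u + P) ^ 2) + exp (-lam * (u - P) ^ 2)) (Icc (-a) 0) := by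
  refine antitoneOn_Icc_of_hasDerivAt_nonpos (hasDerivAt_gaussian_pair lam P) fun u hu ↦ ?_
  have hlamP : 0 < lam * P := by nlinarith [hu.1, hu.2]
  have hlam0 : 0 < lam := by nlinarith [hu.1, hu.2]
  set x := -(4 * lam * P * u) with hx_def
  have hx : 0 ≤ x := by nlinarith [hu.2]
  have hsplit : exp (-lam * (u - P) ^ 2) = exp (-lam * (u + P) ^ 2) * exp (-x) := by
    rw [← exp_add, hx_def]; ring_nf
  have hE : exp (-x) * (1 + x) ≤ 1 := by
    calc exp (-x) * (1 + x) ≤ exp (-x) * exp x := by gcongr; linarith [add_one_le_exp x]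
      _ = 1 := by rw [← exp_add, neg_add_cancel, exp_zero]
  have hkey : 0 ≤ (u + P) + (u - P) * exp (-x) := by
    have h1 : 0 ≤ (u + P) * (1 + x) + (u - P) := by nlinarith [hu.1, hu.2]
    have h2 : 0 ≤ (u - P) * (exp (-x) * (1 + x) - 1) :=
      mul_nonneg_of_nonpos_of_nonpos (by linarith [hu.1, hu.2]) (by linarith)
    have h3 : 0 ≤ (1 + x) * ((u + P) + (u - P) * exp (-x)) := by linarith
    exact (mul_nonneg_iff_of_pos_left (by linarith)).1 h3
  rw [hsplit]
  have := mul_nonneg (mul_nonneg hlam0.le (exp_pos (-lam * (u + P) ^ 2)).le) hkey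
  linarith

noncomputable def gaussianPairWeight (lam P a : ℝ) : ℝ :=
  4 * lam * P * (P + a) * exp (-lam * P * (P - 2 * a))

theorem antitoneOn_Icc_gaussian_pair_add_mul {lam P a : ℝ} (hlam : 0 ≤ lam) (hP : 0 ≤ P) :
    AntitoneOn (fun u ↦ exp (-lam * (u + P) ^ 2) + exp (-lam * (u - P) ^ 2)
      + gaussianPairWeight lam P a * exp (-lam * u ^ 2)) (Icc 0 a) := by
  set ε := gaussianPairWeight lam P a with hε_def
  have hderiv (x : ℝ) := (hasDerivAt_gaussian_pair lam P x).fun_add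
    ((hasDerivAt_exp_neg_mul_add_sq lam 0 x).const_mul ε)
  simp only [add_zero] at hderiv
  refine antitoneOn_Icc_of_hasDerivAt_nonpos hderiv fun u hu ↦ ?_
  have hlamP : 0 ≤ lam * P := mul_nonneg hlam hP
  set B := exp (-lam * (u - P) ^ 2)
  have hA : B * (1 - 4 * lam * P * u) ≤ exp (-lam * (u + P) ^ 2) := by
    have : exp (-lam * (u + P) ^ 2) = B * exp (-(4 * lam * P * u)) := by
      rw [← exp_add]; ring_nf
    rw [this]
    gcongr
    linarith [add_one_le_exp (-(4 * lam * P * u))]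
  have hB : B ≤ exp (-lam * P * (P - 2 * a)) * exp (-lam * u ^ 2) := by
    rw [← exp_add]
    exact exp_le_exp.2 (by nlinarith [mul_nonneg hlamP (by linarith [hu.2] : 0 ≤ a - u)])
  have hε : 4 * lam * P * (u + P) * B ≤ ε * exp (-lam * u ^ 2) := by
    have hB0 : 0 ≤ 4 * lam * P * B := by positivity
    calc 4 * lam * P * (u + P) * B ≤ 4 * lam * P * (P + a) * B := by
          nlinarith [hu.2]
      _ ≤ 4 * lam * P * (P + a) * (exp (-lam * P * (P - 2 * a)) * exp (-lam * u ^ 2)) := by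
          gcongr
          nlinarith [hu.1, hu.2]
      _ = ε * exp (-lam * u ^ 2) := by rw [hε_def, gaussianPairWeight]; ring
  have hnonneg :
      0 ≤ (u + P) * exp (-lam * (u + P) ^ 2) + (u - P) * B + ε * (u * exp (-lam * u ^ 2)) := by
    have h1 := mul_le_mul_of_nonneg_left hA (by linarith [hu.1] : 0 ≤ u + P)
    have h2 := mul_le_mul_of_nonneg_left hε hu.1.le
    have h3 : 0 ≤ u * B := mul_nonneg hu.1.le (exp_pos _).le
    linarith
  linarith [mul_nonneg hlam hnonneg]

theorem abs_sin_nat_mul_le (n : ℕ) (x : ℝ) : |sin (n * x)| ≤ n * |sin x| := by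
  induction n with
  | zero => simp
  | succ n ih =>
    calc |sin ((n + 1 : ℕ) * x)| = |sin (n * x) * cos x + cos (n * x) * sin x| := by
          push_cast; rw [add_mul, one_mul, sin_add]
      _ ≤ |sin (n * x)| * |cos x| + |cos (n * x)| * |sin x| := by
          rw [← abs_mul, ← abs_mul]; exact abs_add_le _ _
      _ ≤ |sin (n * x)| + |sin x| := by
          gcongr
          · exact mul_le_of_le_one_right (abs_nonneg _) (abs_cos_le_one x)
          · exact mul_le_of_le_one_left (abs_nonneg _) (abs_cos_le_one _)
      _ ≤ (n + 1 : ℕ) * |sin x| := by push_cast; linarith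

theorem antitoneOn_cos_nat_mul_add_sq_mul_cos (n : ℕ) :
    AntitoneOn (fun t ↦ cos (n * t) + n ^ 2 * cos t) (Icc 0 π) := by
  have hderiv (t : ℝ) : HasDerivAt (fun t ↦ cos (n * t) + n ^ 2 * cos t)
      (-sin (n * t) * n + n ^ 2 * -sin t) t :=
    (((hasDerivAt_id' t).const_mul (n : ℝ)).cos.congr_deriv (by ring)).fun_add
      ((hasDerivAt_cos t).const_mul _)
  refine antitoneOn_Icc_of_hasDerivAt_nonpos hderiv fun t ht ↦ ?_
  have hsin : 0 ≤ sin t := sin_nonneg_of_nonneg_of_le_pi ht.1.le ht.2.le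
  have := (abs_le.1 ((abs_sin_nat_mul_le n t).trans_eq (by rw [abs_of_nonneg hsin]))).1
  nlinarith [(n.cast_nonneg : (0 : ℝ) ≤ n)]

theorem sq_add_two_le_four_mul_pow (n : ℕ) : ((n : ℝ) + 2) ^ 2 ≤ 4 * (9 / 4) ^ n := by
  induction n with
  | zero => norm_num
  | succ n ih =>
    push_cast
    calc ((n : ℝ) + 1 + 2) ^ 2 ≤ 9 / 4 * ((n : ℝ) + 2) ^ 2 := by
          nlinarith [n.cast_nonneg (α := ℝ)]
      _ ≤ 9 / 4 * (4 * (9 / 4) ^ n) := by gcongr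
      _ = 4 * (9 / 4) ^ (n + 1) := by ring

theorem summable_and_tsum_sq_mul_pow_sq_div_le_one {q : ℝ} (hq0 : 0 < q) (hq : q ≤ 4 / 7) :
    Summable (fun n : ℕ ↦ ((n + 2 : ℕ) : ℝ) ^ 2 * q ^ (n + 2) ^ 2 / q)
      ∧ ∑' n : ℕ, ((n + 2 : ℕ) : ℝ) ^ 2 * q ^ (n + 2) ^ 2 / q ≤ 1 := by
  have hle (n : ℕ) :
      ((n + 2 : ℕ) : ℝ) ^ 2 * q ^ (n + 2) ^ 2 / q ≤ 4 * q ^ 3 * (9 / 4 * q ^ 4) ^ n := by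
    have hpow : q ^ (n + 2) ^ 2 ≤ q ^ (4 * n + 4) :=
      pow_le_pow_of_le_one hq0.le (by linarith) (by nlinarith)
    calc ((n + 2 : ℕ) : ℝ) ^ 2 * q ^ (n + 2) ^ 2 / q
        ≤ 4 * (9 / 4) ^ n * q ^ (4 * n + 4) / q := by
          gcongr
          push_cast
          exact sq_add_two_le_four_mul_pow n
      _ = 4 * q ^ 3 * (9 / 4 * q ^ 4) ^ n := by field_simp; ring
  have hq3 : q ^ 3 ≤ (4 / 7) ^ 3 := pow_le_pow_left₀ hq0.le hq 3
  have hq4 : q ^ 4 ≤ (4 / 7) ^ 4 := pow_le_pow_left₀ hq0.le hq 4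
  obtain ⟨hsum, htsum⟩ := summable_and_tsum_le_of_le_geometric (fun n ↦ by positivity)
    (by positivity) (by nlinarith) hle
  exact ⟨hsum, htsum.trans (by rw [div_le_one (by nlinarith)]; nlinarith)⟩

theorem summable_exp_neg_mul_add_sq {lam : ℝ} (hlam : 0 < lam) (t : ℝ) :
    Summable fun n : ℤ ↦ exp (-lam * (t + n) ^ 2) := by
  have h := ((summable_jacobiTheta₂_term_iff (lam * t / π * Complex.I) (lam / π * Complex.I)).2
    (by simpa using div_pos hlam pi_pos)).norm.mul_left (exp (-lam * t ^ 2))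
  refine h.congr fun n ↦ ?_
  rw [norm_jacobiTheta₂_term, ← exp_add]
  congr 1
  simp only [neg_mul, Complex.mul_im, Complex.div_ofReal_re, Complex.ofReal_re, Complex.I_im,
    mul_one, Complex.div_ofReal_im, Complex.ofReal_im, zero_div, Complex.I_re, mul_zero, add_zero,
    Complex.mul_re, sub_zero, zero_mul]
  field_simp
  ring

theorem summable_exp_neg_sq_div {lam : ℝ} (hlam : 0 < lam) :
    Summable fun n : ℤ ↦ exp (-n ^ 2 / (4 * lam)) :=
  (summable_exp_neg_mul_add_sq (inv_pos.2 (mul_pos four_pos hlam)) 0).congr fun n ↦ by ring_nf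

theorem hasSum_E1 {lam : ℝ} (hlam : 0 < lam) (t : ℝ) :
    HasSum (fun k : ℤ ↦ exp (-lam * (t + 2 * k * π) ^ 2)) (E1 lam t) := by
  have h := summable_exp_neg_mul_add_sq (by positivity : 0 < 4 * π ^ 2 * lam) (t / (2 * π))
  refine (h.congr fun k ↦ ?_).hasSum
  congr 1
  field_simp
  ring

theorem even_E1 (lam : ℝ) : Function.Even (E1 lam) := fun t ↦ by
  rw [E1, E1, ← (Equiv.neg ℤ).tsum_eq]
  refine tsum_congr fun k ↦ ?_
  simp only [Equiv.neg_apply, Int.cast_neg]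
  ring_nf

theorem periodic_E1 (lam : ℝ) : Function.Periodic (E1 lam) (2 * π) := fun t ↦ by
  rw [E1, E1]
  conv_rhs => rw [← (Equiv.addRight (1 : ℤ)).tsum_eq]
  refine tsum_congr fun k ↦ ?_
  simp only [Equiv.coe_addRight, Int.cast_add, Int.cast_one]
  ring_nf

theorem hasSum_E1_pairs_about_pi {lam : ℝ} (hlam : 0 < lam) (t : ℝ) :
    HasSum (fun n : ℕ ↦ exp (-lam * (t - π + (2 * n + 1) * π) ^ 2)
      + exp (-lam * (t - π - (2 * n + 1) * π) ^ 2)) (E1 lam t) := by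
  refine (hasSum_E1 hlam t).nat_add_neg_add_one.congr_fun fun n ↦ ?_
  push_cast
  ring_nf

theorem hasSum_E1_pairs_about_zero {lam : ℝ} (hlam : 0 < lam) (t : ℝ) :
    HasSum (fun n : ℕ ↦ exp (-lam * (t + 2 * (n + 1) * π) ^ 2)
      + exp (-lam * (t - 2 * (n + 1) * π) ^ 2)) (E1 lam t - exp (-lam * t ^ 2)) := by
  have h := (hasSum_E1 hlam t).nat_succ_add_neg_succ
  simp only [Int.cast_zero, mul_zero, zero_mul, add_zero] at h
  refine h.congr_fun fun n ↦ ?_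
  push_cast
  ring_nf

theorem E1_eq_sqrt_mul_tsum_exp_mul_cos {lam : ℝ} (hlam : 0 < lam) (t : ℝ) :
    E1 lam t = √((4 * π * lam)⁻¹) * ∑' n : ℤ, exp (-n ^ 2 / (4 * lam)) * cos (n * t) := by
  set a : ℝ := (4 * π * lam)⁻¹
  have ha : 0 < a := by positivity
  have key := Complex.tsum_exp_neg_quadratic (a := a) (by simpa using ha)
    (-Complex.I * t / (2 * π))
  have hpi : (π : ℂ) ≠ 0 := Complex.ofReal_ne_zero.2 pi_ne_zero
  have hlam' : (lam : ℂ) ≠ 0 := Complex.ofReal_ne_zero.2 hlam.ne'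
  have hlhs (n : ℤ) : -π * (a : ℂ) * n ^ 2 + 2 * π * (-Complex.I * t / (2 * π)) * n
      = ((-n ^ 2 / (4 * lam) : ℝ) : ℂ) + ((-(n * t) : ℝ) : ℂ) * Complex.I := by
    simp only [a]; push_cast; field_simp
  have hIb : Complex.I * (-Complex.I * t / (2 * π)) = t / (2 * π) := by
    rw [← mul_div_assoc, ← mul_assoc, mul_neg, Complex.I_mul_I, neg_neg, one_mul]
  have hrhs (n : ℤ) : -π / (a : ℂ) * (n + Complex.I * (-Complex.I * t / (2 * π))) ^ 2
      = ((-lam * (t + 2 * n * π) ^ 2 : ℝ) : ℂ) := by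
    rw [hIb]; simp only [a]; push_cast; field_simp; ring
  simp only [hlhs, hrhs, ← Complex.ofReal_exp, ← Complex.ofReal_tsum] at key
  have hsqrt : (a : ℂ) ^ (1 / 2 : ℂ) = (√a : ℂ) := by
    rw [sqrt_eq_rpow, Complex.ofReal_cpow ha.le]; norm_num
  have hsum : Summable fun n : ℤ ↦
      Complex.exp (((-n ^ 2 / (4 * lam) : ℝ) : ℂ) + ((-(n * t) : ℝ) : ℂ) * Complex.I) := by
    refine Summable.of_norm ((summable_exp_neg_sq_div hlam).congr fun n ↦ ?_)
    rw [Complex.norm_exp, Complex.add_re, Complex.ofReal_re, Complex.mul_I_re, Complex.ofReal_im,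
      neg_zero, add_zero]
  rw [hsqrt, one_div, eq_inv_mul_iff_mul_eq₀ (by simpa using (sqrt_pos.2 ha).ne')] at key
  have := congrArg Complex.re key
  rw [Complex.re_ofReal_mul, Complex.re_tsum hsum, Complex.ofReal_re] at this
  rw [E1, ← this]
  congr 1
  refine tsum_congr fun n ↦ ?_
  simp only [Complex.exp_re, Complex.add_re, Complex.add_im, Complex.ofReal_re,
    Complex.ofReal_im, Complex.mul_I_re, Complex.mul_I_im, neg_zero, add_zero, zero_add, cos_neg]

theorem hasSum_E1_fourier_tail {lam : ℝ} (hlam : 0 < lam) (t : ℝ) :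
    HasSum (fun n : ℕ ↦ 2 * exp (-1 / (4 * lam)) ^ (n + 2) ^ 2 * cos ((n + 2 : ℕ) * t))
      (E1 lam t / √((4 * π * lam)⁻¹) - 1 - 2 * exp (-1 / (4 * lam)) * cos t) := by
  have hsum : Summable fun n : ℤ ↦ exp (-n ^ 2 / (4 * lam)) * cos (n * t) := by
    refine Summable.of_norm_bounded (summable_exp_neg_sq_div hlam) fun n ↦ ?_
    rw [norm_mul, norm_of_nonneg (exp_pos _).le]
    exact mul_le_of_le_one_right (exp_pos _).le (abs_cos_le_one _)
  have hval : ∑' n : ℤ, exp (-n ^ 2 / (4 * lam)) * cos (n * t)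
      = E1 lam t / √((4 * π * lam)⁻¹) := by
    rw [E1_eq_sqrt_mul_tsum_exp_mul_cos hlam,
      mul_div_cancel_left₀ _ (sqrt_pos.2 (by positivity)).ne']
  have h := (hasSum_nat_add_iff' 1).2 hsum.hasSum.nat_succ_add_neg_succ
  rw [hval] at h
  simp only [Finset.range_one, Finset.sum_singleton, Int.cast_zero, Nat.cast_zero, zero_add,
    ne_eq, OfNat.ofNat_ne_zero, not_false_eq_true, zero_pow, neg_zero, zero_div, exp_zero,
    zero_mul, cos_zero, mul_one] at h
  push_cast [neg_sq, neg_mul, cos_neg, one_pow, one_mul, ← two_mul, ← mul_assoc, add_assoc,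
    one_add_one_eq_two] at h
  refine h.congr_fun fun n ↦ ?_
  rw [← exp_nat_mul]
  push_cast
  ring_nf

theorem antitoneOn_E1_Icc_half_pi_pi {lam : ℝ} (hlam : 1 ≤ lam * π ^ 2) :
    AntitoneOn (E1 lam) (Icc (π / 2) π) := by
  have hlam0 : 0 < lam := pos_of_mul_pos_left (one_pos.trans_le hlam) (sq_nonneg π)
  intro s hs t ht hst
  refine hasSum_le (fun n ↦ ?_) (hasSum_E1_pairs_about_pi hlam0 t)
    (hasSum_E1_pairs_about_pi hlam0 s)
  have hn : (0 : ℝ) ≤ n := n.cast_nonneg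
  have hP : 1 ≤ 2 * lam * ((2 * n + 1) * π) * ((2 * n + 1) * π - π / 2) := by
    have : 1 ≤ (2 * (n : ℝ) + 1) * (4 * n + 1) := by nlinarith
    nlinarith [mul_le_mul_of_nonneg_left this (by positivity : 0 ≤ lam * π ^ 2)]
  exact antitoneOn_Icc_neg_gaussian_pair (by nlinarith [pi_pos]) hP
    ⟨by linarith [hs.1], by linarith [hs.2]⟩ ⟨by linarith [ht.1], by linarith [ht.2]⟩
    (by linarith)

theorem gaussianPairWeight_le_geometric {lam : ℝ} (hlam : 0 ≤ lam) (n : ℕ) :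
    gaussianPairWeight lam (2 * (n + 1) * π) (π / 2)
      ≤ 20 * exp (-lam * π ^ 2) * exp (-lam * π ^ 2) ^ n := by
  set m : ℝ := n + 1
  set y := lam * π ^ 2
  have hm : 1 ≤ m := by simp [m]
  have hy : 0 ≤ y := by positivity
  have hx : y * m ^ 2 * exp (-(y * m ^ 2)) ≤ 1 := by
    calc y * m ^ 2 * exp (-(y * m ^ 2)) ≤ exp (y * m ^ 2) * exp (-(y * m ^ 2)) := by
          gcongr; linarith [add_one_le_exp (y * m ^ 2)]
      _ = 1 := by rw [← exp_add, add_neg_cancel, exp_zero]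
  have hexp : exp (-lam * (2 * m * π) * (2 * m * π - 2 * (π / 2)))
      ≤ exp (-(y * m ^ 2)) * exp (-(y * m ^ 2)) := by
    rw [← exp_add]
    exact exp_le_exp.2 (by nlinarith [mul_nonneg hy (by nlinarith : 0 ≤ m ^ 2 - m)])
  have hpow : exp (-(y * m ^ 2)) ≤ exp (-y) * exp (-y) ^ n := by
    rw [← pow_succ', ← exp_nat_mul]
    exact exp_le_exp.2 (by push_cast; nlinarith [mul_le_mul_of_nonneg_left hm hy])
  have hcoef : 4 * lam * (2 * m * π) * (2 * m * π + π / 2) ≤ 20 * (y * m ^ 2) := by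
    nlinarith [mul_le_mul_of_nonneg_left hm hy]
  calc gaussianPairWeight lam (2 * m * π) (π / 2)
      ≤ 20 * (y * m ^ 2) * (exp (-(y * m ^ 2)) * exp (-(y * m ^ 2))) :=
        mul_le_mul hcoef hexp (exp_pos _).le (by positivity)
    _ = 20 * (y * m ^ 2 * exp (-(y * m ^ 2))) * exp (-(y * m ^ 2)) := by ring
    _ ≤ 20 * 1 * (exp (-y) * exp (-y) ^ n) := by gcongr
    _ = 20 * exp (-lam * π ^ 2) * exp (-lam * π ^ 2) ^ n := by simp only [y, neg_mul]; ring

theorem summable_and_tsum_gaussianPairWeight_le_one {lam : ℝ} (hlam : 2 / 5 ≤ lam) :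
    Summable (fun n : ℕ ↦ gaussianPairWeight lam (2 * (n + 1) * π) (π / 2))
      ∧ ∑' n : ℕ, gaussianPairWeight lam (2 * (n + 1) * π) (π / 2) ≤ 1 := by
  have hr : exp (-lam * π ^ 2) ≤ 1 / 21 := by
    have hπ := pi_gt_d2
    have hx : 39 / 10 ≤ lam * π ^ 2 := by nlinarith
    have h := sum_le_exp_of_nonneg (by linarith : 0 ≤ lam * π ^ 2) 4
    norm_num [Finset.sum_range_succ, Nat.factorial] at h
    rw [neg_mul, exp_neg, inv_le_comm₀ (exp_pos _) (by norm_num)]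
    nlinarith
  obtain ⟨hsum, hle⟩ := summable_and_tsum_le_of_le_geometric
    (fun n ↦ by unfold gaussianPairWeight; positivity) (exp_pos _).le (by linarith)
    (gaussianPairWeight_le_geometric (by linarith))
  exact ⟨hsum, hle.trans (by rw [div_le_one (by linarith)]; linarith)⟩

theorem antitoneOn_E1_Icc_zero_half_pi {lam : ℝ} (hlam : 2 / 5 ≤ lam) :
    AntitoneOn (E1 lam) (Icc 0 (π / 2)) := by
  have hlam0 : 0 < lam := by linarith
  have hE : E1 lam = fun t ↦ exp (-lam * t ^ 2) + ∑' n : ℕ,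
      (exp (-lam * (t + 2 * (n + 1) * π) ^ 2) + exp (-lam * (t - 2 * (n + 1) * π) ^ 2)) :=
    funext fun t ↦ by rw [(hasSum_E1_pairs_about_zero hlam0 t).tsum_eq]; ring
  obtain ⟨hsum, hsum₁⟩ := summable_and_tsum_gaussianPairWeight_le_one hlam
  rw [hE]
  exact ((antitoneOn_exp_neg_mul_sq hlam0.le).mono Icc_subset_Ici_self).add_tsum_of_dominated
    (fun n ↦ antitoneOn_Icc_gaussian_pair_add_mul hlam0.le (by positivity))
    (fun t _ ↦ (hasSum_E1_pairs_about_zero hlam0 t).summable) hsum hsum₁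

theorem antitoneOn_E1_of_le_two_fifths {lam : ℝ} (hlam : 0 < lam) (hlam' : lam ≤ 2 / 5) :
    AntitoneOn (E1 lam) (Icc 0 π) := by
  set q := exp (-1 / (4 * lam)) with hq_def
  have hq0 : 0 < q := exp_pos _
  have hq : q ≤ 4 / 7 := by
    have h := quadratic_le_exp_of_nonneg (by positivity : (0 : ℝ) ≤ 1 / (4 * lam))
    have h58 : 5 / 8 ≤ 1 / (4 * lam) := by rw [le_div_iff₀ (by positivity)]; linarith
    rw [hq_def, neg_div, exp_neg, inv_le_comm₀ (exp_pos _) (by norm_num)]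
    nlinarith
  obtain ⟨hsum, hsum₁⟩ := summable_and_tsum_sq_mul_pow_sq_div_le_one hq0 hq
  have hE (t : ℝ) : E1 lam t = √((4 * π * lam)⁻¹) * (1 + (2 * q * cos t
      + ∑' n : ℕ, 2 * q ^ (n + 2) ^ 2 * cos ((n + 2 : ℕ) * t))) := by
    rw [(hasSum_E1_fourier_tail hlam t).tsum_eq, ← hq_def]
    field_simp
    ring
  have hdom : AntitoneOn (fun t ↦ 2 * q * cos t
      + ∑' n : ℕ, 2 * q ^ (n + 2) ^ 2 * cos ((n + 2 : ℕ) * t)) (Icc 0 π) := by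
    refine AntitoneOn.add_tsum_of_dominated (fun s hs t ht hst ↦ ?_) (fun n s hs t ht hst ↦ ?_)
      (fun t _ ↦ (hasSum_E1_fourier_tail hlam t).summable) hsum hsum₁
    · exact mul_le_mul_of_nonneg_left (antitoneOn_cos hs ht hst) (by positivity)
    · have e (x : ℝ) : 2 * q ^ (n + 2) ^ 2 * cos ((n + 2 : ℕ) * x)
          + ((n + 2 : ℕ) : ℝ) ^ 2 * q ^ (n + 2) ^ 2 / q * (2 * q * cos x)
          = 2 * q ^ (n + 2) ^ 2 * (cos ((n + 2 : ℕ) * x) + ((n + 2 : ℕ) : ℝ) ^ 2 * cos x) := by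
        field_simp
      simp only [e]
      exact mul_le_mul_of_nonneg_left (antitoneOn_cos_nat_mul_add_sq_mul_cos (n + 2) hs ht hst)
        (by positivity)
  intro s hs t ht hst
  rw [hE s, hE t]
  exact mul_le_mul_of_nonneg_left (add_le_add_right (hdom hs ht hst) 1) (sqrt_nonneg _)

theorem antitoneOn_E1 {lam : ℝ} (hlam : 0 < lam) : AntitoneOn (E1 lam) (Icc 0 π) := by
  -- `2/5` lies where both regimes apply: `exp (-5/8) ≤ 4/7` and `exp ((2/5) π²) ≥ 21`
  rcases le_or_gt lam (2 / 5) with hsmall | hlarge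
  · exact antitoneOn_E1_of_le_two_fifths hlam hsmall
  · have hπ := pi_gt_d2
    rw [← Icc_union_Icc_eq_Icc (by positivity : 0 ≤ π / 2) (by linarith : π / 2 ≤ π)]
    exact (antitoneOn_E1_Icc_zero_half_pi hlarge.le).union_right
      (antitoneOn_E1_Icc_half_pi_pi (by nlinarith)) (isGreatest_Icc (by positivity))
      (isLeast_Icc (by linarith))

theorem stmt15 (lam : ℝ) (hlam : 0 < lam) :
    (∀ t : ℝ, E1 lam t ≤ E1 lam 0 ∧ E1 lam Real.pi ≤ E1 lam t) ∧
      AntitoneOn (E1 lam) (Set.Icc 0 Real.pi) :=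
  ⟨(periodic_E1 lam).extrema_of_even_of_antitoneOn pi_pos (even_E1 lam) (antitoneOn_E1 hlam),
    antitoneOn_E1 hlam⟩
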